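/- If f(ν) = 1/2 and Σᵢ wᵢ = 1, then the weighted general operator satisfies the self-De Morgan property with respect to the negation η(x) = f⁻¹(1 - f(x)): a_{ν,w}(η(x₁),...,η(x_n)) = η(a_{ν,w}(x₁,...,x_n)) for all xᵢ ∈ [0,1]. -/
import Mathlib


noncomputable def cut (x : ℝ) : ℝ := max (min x 1) 0

lemma cut_one_sub (s : ℝ) : cut (1 - s) = 1 - cut s := by
  unfold cut
  rw [max_def, max_def, min_def, min_def]
  split_ifs <;> linarith

lemma cut_mem_Icc (s : ℝ) : cut s ∈ Set.Icc (0:ℝ) 1 := by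
  unfold cut
  constructor
  · exact le_max_right _ _
  · exact max_le (min_le_right _ _) zero_le_one

theorem weighted_general_operator_self_deMorgan
    (f g : ℝ → ℝ)
    (hmono : StrictMonoOn f (Set.Icc (0:ℝ) 1))
    (hbij : Set.BijOn f (Set.Icc (0:ℝ) 1) (Set.Icc (0:ℝ) 1))
    (hgf : ∀ x ∈ Set.Icc (0:ℝ) 1, g (f x) = x)
    (hfg : ∀ y ∈ Set.Icc (0:ℝ) 1, f (g y) = y)
    (ν : ℝ) (hν : ν ∈ Set.Icc (0:ℝ) 1) (hfν : f ν = 1/2)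
    (n : ℕ) (w : Fin n → ℝ) (hw : ∀ i, 0 < w i) (hsum : ∑ i, w i = 1)
    (x : Fin n → ℝ) (hx : ∀ i, x i ∈ Set.Icc (0:ℝ) 1) :
    g (cut (∑ i, w i * (f (g (1 - f (x i))) - f ν) + f ν)) =
      g (1 - f (g (cut (∑ i, w i * (f (x i) - f ν) + f ν)))) := by
  set S : ℝ := ∑ i, w i * (f (x i) - f ν) + f ν with hS
  have hfx : ∀ i, f (x i) ∈ Set.Icc (0:ℝ) 1 := fun i => hbij.mapsTo (hx i)
  have h1 : ∀ i, f (g (1 - f (x i))) = 1 - f (x i) := by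
    intro i
    apply hfg
    have := hfx i
    constructor <;> [linarith [this.2]; linarith [this.1]]
  have h2 : (∑ i, w i * (f (g (1 - f (x i))) - f ν) + f ν) = 1 - S := by
    have : ∀ i ∈ Finset.univ, w i * (f (g (1 - f (x i))) - f ν)
        = -(w i * (f (x i) - f ν)) := by
      intro i _
      rw [h1 i, hfν]; ring
    rw [Finset.sum_congr rfl this, Finset.sum_neg_distrib, hS, hfν]
    ring
  rw [h2, cut_one_sub, hfg _ (cut_mem_Icc S)]
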